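/- arXiv:1308.5466 — 2 statements merged into one kernel-verified Lean document; each statement's English description precedes it below -/
import Mathlib

section
/- For any finite simple graph G and any permutation π of V(G), the domination number of πG satisfies γ(G) ≤ γ(πG) ≤ 2γ(G). -/
open SimpleGraph

variable {V : Type*}

/-- `A` dominates `B`: every vertex of `B` is in the closed neighborhood of some vertex of `A`. -/
def Dominates (G : SimpleGraph V) (A B : Set V) : Prop :=
  ∀ b ∈ B, ∃ a ∈ A, a = b ∨ G.Adj a b

/-- `D` is a dominating set of `G`. -/
def IsDomSet (G : SimpleGraph V) (D : Set V) : Prop :=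
  Dominates G D Set.univ

/-- The domination number of `G`. -/
noncomputable def domNum (G : SimpleGraph V) : ℕ :=
  sInf {n | ∃ D : Set V, IsDomSet G D ∧ D.ncard = n}

/-- The prism of `G` with respect to a permutation `π`: two disjoint copies of `G`
joined by the perfect matching `u – π u`. -/
def prism (G : SimpleGraph V) (π : Equiv.Perm V) : SimpleGraph (V ⊕ V) :=
  SimpleGraph.fromRel (fun a b =>
    match a, b with
    | Sum.inl u, Sum.inl v => G.Adj u v
    | Sum.inr u, Sum.inr v => G.Adj u v
    | Sum.inl u, Sum.inr v => v = π u
    | Sum.inr _, Sum.inl _ => False)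

/-- `G` is a universal fixer. -/
def IsUniversalFixer (G : SimpleGraph V) : Prop :=
  ∀ π : Equiv.Perm V, domNum (prism G π) = domNum G

/-- `D` is a γ-set (minimum dominating set) of `G`. -/
def IsGammaSet (G : SimpleGraph V) (D : Set V) : Prop :=
  IsDomSet G D ∧ D.ncard = domNum G

/-- `D = [D₁, D₂]` is a symmetric γ-set of `G`. -/
def IsSymGammaSet (G : SimpleGraph V) (D D1 D2 : Set V) : Prop :=
  IsGammaSet G D ∧ D = D1 ∪ D2 ∧ Disjoint D1 D2 ∧ D1.Nonempty ∧ D2.Nonempty ∧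
    Dominates G D1 (Set.univ \ D2) ∧ Dominates G D2 (Set.univ \ D1)

/-- `S` is a 2-packing: closed neighborhoods of distinct vertices of `S` are disjoint. -/
def IsTwoPacking (G : SimpleGraph V) (S : Set V) : Prop :=
  ∀ x ∈ S, ∀ y ∈ S, x ≠ y →
    Disjoint (insert x (G.neighborSet x)) (insert y (G.neighborSet y))

/-- `D` is an even symmetric γ-set of `G`. -/
def IsEvenSymGammaSet (G : SimpleGraph V) (D : Set V) : Prop :=
  ∃ D1 D2, IsSymGammaSet G D D1 D2 ∧ D1.ncard = D2.ncard

/-! A dominating set of `G` placed in both copies dominates the prism, which gives the upper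
bound. For the lower bound, project the prism onto `V` by `inl u ↦ u`, `inr u ↦ π⁻¹ u`: every
vertex dominating `inl v` in the prism is sent into the closed neighbourhood of `v` in `G`, so the
projection of a dominating set of the prism dominates `G` and is no larger. -/

section Domination

variable {W : Type*} {G : SimpleGraph V} {H : SimpleGraph W}

theorem Dominates.union {A₁ A₂ B₁ B₂ : Set V} (h₁ : Dominates G A₁ B₁) (h₂ : Dominates G A₂ B₂) :
    Dominates G (A₁ ∪ A₂) (B₁ ∪ B₂) := by
  rintro b (hb | hb)
  · obtain ⟨a, ha, hab⟩ := h₁ b hb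
    exact ⟨a, Or.inl ha, hab⟩
  · obtain ⟨a, ha, hab⟩ := h₂ b hb
    exact ⟨a, Or.inr ha, hab⟩

theorem Dominates.image {A B : Set V} (f : V → W)
    (hf : ∀ a, ∀ b ∈ B, G.Adj a b → f a = f b ∨ H.Adj (f a) (f b)) (h : Dominates G A B) :
    Dominates H (f '' A) (f '' B) := by
  rintro _ ⟨b, hb, rfl⟩
  obtain ⟨a, ha, rfl | hab⟩ := h b hb
  · exact ⟨f a, Set.mem_image_of_mem f ha, Or.inl rfl⟩
  · exact ⟨f a, Set.mem_image_of_mem f ha, hf a b hb hab⟩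

theorem domNum_le_ncard {D : Set V} (hD : IsDomSet G D) : domNum G ≤ D.ncard :=
  Nat.sInf_le ⟨D, hD, rfl⟩

theorem exists_isGammaSet (G : SimpleGraph V) : ∃ D, IsGammaSet G D := by
  have hne : {n | ∃ D : Set V, IsDomSet G D ∧ D.ncard = n}.Nonempty :=
    ⟨_, Set.univ, fun b _ => ⟨b, trivial, Or.inl rfl⟩, rfl⟩
  obtain ⟨D, hD, hcard⟩ := Nat.sInf_mem hne
  exact ⟨D, hD, hcard⟩

end Domination

section Prism

variable {G : SimpleGraph V} {π : Equiv.Perm V} {u v : V}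

@[simp]
theorem prism_adj_inl_inl : (prism G π).Adj (.inl u) (.inl v) ↔ G.Adj u v := by
  simpa [prism, G.adj_comm v u] using G.ne_of_adj

@[simp]
theorem prism_adj_inr_inr : (prism G π).Adj (.inr u) (.inr v) ↔ G.Adj u v := by
  simpa [prism, G.adj_comm v u] using G.ne_of_adj

@[simp]
theorem prism_adj_inr_inl : (prism G π).Adj (.inr u) (.inl v) ↔ u = π v := by
  simp [prism]

variable (G π)

theorem domNum_prism_le : domNum (prism G π) ≤ 2 * domNum G := by
  obtain ⟨D, hD, hcard⟩ := exists_isGammaSet G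
  have hdom : IsDomSet (prism G π) (Sum.inl '' D ∪ Sum.inr '' D) := by
    have hinl := hD.image (H := prism G π) Sum.inl fun _ _ _ h => Or.inr (prism_adj_inl_inl.2 h)
    have hinr := hD.image (H := prism G π) Sum.inr fun _ _ _ h => Or.inr (prism_adj_inr_inr.2 h)
    have hunion := hinl.union hinr
    rwa [Set.image_univ, Set.image_univ, Set.range_inl_union_range_inr] at hunion
  calc domNum (prism G π) ≤ (Sum.inl '' D ∪ Sum.inr '' D).ncard := domNum_le_ncard hdom
    _ ≤ (Sum.inl '' D).ncard + (Sum.inr '' D).ncard := Set.ncard_union_le _ _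
    _ = 2 * domNum G := by
      rw [Set.ncard_image_of_injective _ Sum.inl_injective,
        Set.ncard_image_of_injective _ Sum.inr_injective, hcard, two_mul]

theorem domNum_le_domNum_prism [Finite V] : domNum G ≤ domNum (prism G π) := by
  obtain ⟨E, hE, hcard⟩ := exists_isGammaSet (prism G π)
  let proj : V ⊕ V → V := Sum.elim id π.symm
  have hproj : ∀ a, ∀ b ∈ Set.range Sum.inl, (prism G π).Adj a b →
      proj a = proj b ∨ G.Adj (proj a) (proj b) := by
    rintro (u | u) _ ⟨v, rfl⟩ hadj
    · exact Or.inr (prism_adj_inl_inl.1 hadj)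
    · exact Or.inl (by simp [proj, prism_adj_inr_inl.1 hadj])
  have hdom : IsDomSet G (proj '' E) := by
    have h := Dominates.image proj hproj fun b _ => hE b trivial
    rwa [← Set.range_comp, show proj ∘ Sum.inl = id from rfl, Set.range_id] at h
  calc domNum G ≤ (proj '' E).ncard := domNum_le_ncard hdom
    _ ≤ E.ncard := Set.ncard_image_le E.toFinite
    _ = domNum (prism G π) := hcard

end Prism

theorem stmt_0 [Fintype V] (G : SimpleGraph V) (π : Equiv.Perm V) :
    domNum G ≤ domNum (prism G π) ∧ domNum (prism G π) ≤ 2 * domNum G :=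
  ⟨domNum_le_domNum_prism G π, domNum_prism_le G π⟩
end

section
/- A nontrivial connected graph G has a symmetric γ-set if and only if G has an independent γ-set D admitting a partition D = [D₁, D₂] such that each vertex in V(G)∖D is adjacent to exactly one vertex in D₁ and exactly one vertex in D₂, and each vertex in D is adjacent to at least two vertices in V(G)∖D. -/
/-! In the forward direction every property is forced by the minimality of `D`: an edge
inside `D` would let one vertex of `D` be dropped, while a vertex outside `D` with two
neighbours in `D₁`, or a vertex of `D` with only one neighbour outside `D`, would let two
vertices of `D` be exchanged for one common neighbour. Conversely, a vertex outside `D` with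
a neighbour in each half is dominated by each half. -/

open SimpleGraph

variable {V : Type*}

variable {G : SimpleGraph V} {A B D D1 D2 : Set V} {a b d u v x y : V}

lemma Dominates.exists_adj (h : Dominates G A B) (hb : b ∈ B) (hbA : b ∉ A) :
    ∃ a ∈ A, G.Adj a b := by
  obtain ⟨a, ha, rfl | hab⟩ := h b hb
  exacts [absurd ha hbA, ⟨a, ha, hab⟩]

lemma IsGammaSet.ncard_le (hD : IsGammaSet G D) (hS : IsDomSet G A) : D.ncard ≤ A.ncard :=
  hD.2 ▸ Nat.sInf_le ⟨A, hS, rfl⟩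

/-- Otherwise `insert v (D \ {d, a})` would be a dominating set smaller than `D`. -/
lemma IsGammaSet.exists_pair_private_neighbor [Finite V] (hD : IsGammaSet G D) (hd : d ∈ D)
    (ha : a ∈ D) (hda : d ≠ a) (hvd : G.Adj v d) (hva : G.Adj v a) :
    ∃ c ∉ D, c ≠ v ∧ ∀ e ∈ D, G.Adj e c → e = d ∨ e = a := by
  by_contra! h
  have hdom : IsDomSet G (insert v (D \ {d, a})) := by
    intro c _
    by_cases hc : c = v ∨ c = d ∨ c = a
    · refine ⟨v, Set.mem_insert _ _, ?_⟩
      rcases hc with rfl | rfl | rfl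
      exacts [Or.inl rfl, Or.inr hvd, Or.inr hva]
    push Not at hc
    by_cases hcD : c ∈ D
    · exact ⟨c, Set.mem_insert_of_mem _ ⟨hcD, by simp [hc.2.1, hc.2.2]⟩, Or.inl rfl⟩
    obtain ⟨e, heD, hec, hed, hea⟩ := h c hcD hc.1
    exact ⟨e, Set.mem_insert_of_mem _ ⟨heD, by simp [hed, hea]⟩, Or.inr hec⟩
  have hpair : ({d, a} : Set V) ⊆ D := Set.insert_subset hd (Set.singleton_subset_iff.mpr ha)
  have htwo : 2 ≤ D.ncard := Set.ncard_pair hda ▸ Set.ncard_le_ncard hpair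
  have hlt : (insert v (D \ {d, a})).ncard < D.ncard :=
    calc _ ≤ (D \ {d, a}).ncard + 1 := Set.ncard_insert_le _ _
      _ = D.ncard - 2 + 1 := by rw [Set.ncard_sdiff hpair, Set.ncard_pair hda]
      _ < D.ncard := by omega
  exact (hD.ncard_le hdom).not_gt hlt

namespace IsSymGammaSet

lemma symm (h : IsSymGammaSet G D D1 D2) : IsSymGammaSet G D D2 D1 :=
  let ⟨hD, hU, hdisj, hne1, hne2, hdom1, hdom2⟩ := h
  ⟨hD, hU.trans (Set.union_comm _ _), hdisj.symm, hne2, hne1, hdom2, hdom1⟩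

lemma disjoint (h : IsSymGammaSet G D D1 D2) : Disjoint D1 D2 :=
  h.2.2.1

lemma mem_left (h : IsSymGammaSet G D D1 D2) (hx : x ∈ D1) : x ∈ D :=
  h.2.1 ▸ Or.inl hx

lemma exists_adj_left (h : IsSymGammaSet G D D1 D2) (hv : v ∉ D) : ∃ d ∈ D1, G.Adj d v :=
  h.2.2.2.2.2.1.exists_adj ⟨trivial, fun hv2 => hv (h.symm.mem_left hv2)⟩
    fun hv1 => hv (h.mem_left hv1)

lemma not_adj_of_mem_left [Finite V] (h : IsSymGammaSet G D D1 D2) (hx : x ∈ D1) (hy : y ∈ D) :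
    ¬ G.Adj x y := by
  intro hxy
  have hdom : IsDomSet G (D \ {x}) := by
    intro b _
    by_cases hbx : b = x
    · exact ⟨y, ⟨hy, hxy.ne.symm⟩, Or.inr (hbx ▸ hxy.symm)⟩
    by_cases hbD : b ∈ D
    · exact ⟨b, ⟨hbD, hbx⟩, Or.inl rfl⟩
    obtain ⟨e, he2, heb⟩ := h.symm.exists_adj_left hbD
    exact ⟨e, ⟨h.symm.mem_left he2, (h.disjoint.ne_of_mem hx he2).symm⟩, Or.inr heb⟩
  exact (h.1.ncard_le hdom).not_gt (Set.ncard_sdiff_singleton_lt_of_mem (h.mem_left hx))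

lemma not_adj [Finite V] (h : IsSymGammaSet G D D1 D2) (hx : x ∈ D) (hy : y ∈ D) :
    ¬ G.Adj x y := by
  rcases h.2.1 ▸ hx with hx1 | hx2
  exacts [h.not_adj_of_mem_left hx1 hy, h.symm.not_adj_of_mem_left hx2 hy]

lemma existsUnique_adj_left [Finite V] (h : IsSymGammaSet G D D1 D2) (hv : v ∉ D) :
    ∃! d, d ∈ D1 ∧ G.Adj v d := by
  obtain ⟨a, ha1, hav⟩ := h.exists_adj_left hv
  refine ⟨a, ⟨ha1, hav.symm⟩, fun d ⟨hd1, hvd⟩ => ?_⟩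
  by_contra hda
  obtain ⟨c, hcD, -, hc⟩ :=
    h.1.exists_pair_private_neighbor (h.mem_left hd1) (h.mem_left ha1) hda hvd hav.symm
  obtain ⟨e, he2, hec⟩ := h.symm.exists_adj_left hcD
  rcases hc e (h.symm.mem_left he2) hec with rfl | rfl
  exacts [h.disjoint.ne_of_mem hd1 he2 rfl, h.disjoint.ne_of_mem ha1 he2 rfl]

/-- If `u` were the only neighbour of `x` outside `D`, then `x` and a neighbour of `u` in `D2`
could be exchanged for `u`. -/
lemma two_le_ncard_neighborSet_diff_of_mem_left [Finite V] (h : IsSymGammaSet G D D1 D2)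
    (hx : x ∈ D1) (hxu : G.Adj x u) : 2 ≤ (G.neighborSet x \ D).ncard := by
  have huD : u ∉ D := fun huD => h.not_adj (h.mem_left hx) huD hxu
  obtain ⟨b, hb2, hbu⟩ := h.symm.exists_adj_left huD
  obtain ⟨c, hcD, hcu, hc⟩ := h.1.exists_pair_private_neighbor (h.mem_left hx)
    (h.symm.mem_left hb2) (h.disjoint.ne_of_mem hx hb2) hxu.symm hbu.symm
  obtain ⟨e, he1, hec⟩ := h.exists_adj_left hcD
  obtain rfl : e = x :=
    (hc e (h.mem_left he1) hec).resolve_right (h.disjoint.ne_of_mem he1 hb2)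
  exact (Set.one_lt_ncard_iff (Set.toFinite _)).mpr ⟨u, c, ⟨hxu, huD⟩, ⟨hec, hcD⟩, hcu.symm⟩

lemma two_le_ncard_neighborSet_diff [Finite V] (h : IsSymGammaSet G D D1 D2) (hx : x ∈ D)
    (hxu : G.Adj x u) : 2 ≤ (G.neighborSet x \ D).ncard := by
  rcases h.2.1 ▸ hx with hx1 | hx2
  exacts [h.two_le_ncard_neighborSet_diff_of_mem_left hx1 hxu,
    h.symm.two_le_ncard_neighborSet_diff_of_mem_left hx2 hxu]

end IsSymGammaSet

lemma dominates_of_forall_adj (hU : D = D1 ∪ D2) (h : ∀ v ∉ D, ∃ d ∈ D1, G.Adj v d) :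
    Dominates G D1 (Set.univ \ D2) := by
  rintro b ⟨-, hb2⟩
  by_cases hb1 : b ∈ D1
  · exact ⟨b, hb1, Or.inl rfl⟩
  obtain ⟨d, hd1, hbd⟩ := h b (hU ▸ fun hb => hb.elim hb1 hb2)
  exact ⟨d, hd1, Or.inr hbd.symm⟩

theorem stmt_9 [Fintype V] (G : SimpleGraph V) (hconn : G.Connected)
    (hn : 1 < Fintype.card V) :
    (∃ D D1 D2 : Set V, IsSymGammaSet G D D1 D2) ↔
      ∃ D D1 D2 : Set V, IsGammaSet G D ∧ (∀ x ∈ D, ∀ y ∈ D, ¬ G.Adj x y) ∧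
        D = D1 ∪ D2 ∧ Disjoint D1 D2 ∧ D1.Nonempty ∧ D2.Nonempty ∧
        (∀ v ∉ D, (∃! d, d ∈ D1 ∧ G.Adj v d) ∧ (∃! d, d ∈ D2 ∧ G.Adj v d)) ∧
        (∀ x ∈ D, 2 ≤ (G.neighborSet x \ D).ncard) := by
  have := Fintype.one_lt_card_iff_nontrivial.mp hn
  constructor
  · rintro ⟨D, D1, D2, h⟩
    refine ⟨D, D1, D2, h.1, fun x hx y hy => h.not_adj hx hy, h.2.1, h.disjoint, h.2.2.2.1,
      h.2.2.2.2.1, fun v hv => ⟨h.existsUnique_adj_left hv, h.symm.existsUnique_adj_left hv⟩,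
      fun x hx => ?_⟩
    obtain ⟨u, hxu⟩ := hconn.preconnected.exists_adj_of_nontrivial x
    exact h.two_le_ncard_neighborSet_diff hx hxu
  · rintro ⟨D, D1, D2, hD, -, hU, hdisj, hne1, hne2, huniq, -⟩
    exact ⟨D, D1, D2, hD, hU, hdisj, hne1, hne2,
      dominates_of_forall_adj hU fun v hv => (huniq v hv).1.exists,
      dominates_of_forall_adj (hU.trans (Set.union_comm _ _)) fun v hv =>
        (huniq v hv).2.exists⟩
end
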